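/- Let A ⊂ M_d(ℂ) be a compact set with positive joint spectral radius, indexed in a compact metric space I, and let Z_A := ⋃_{μ ∈ M_max(A)} supp μ be the Mather set. Let d be a metric generating the topology of Σ_I and set dist(x, Z_A) := inf{d(x,y) : y ∈ Z_A}. If z ∈ Σ_I is weakly extremal, then lim_{n→∞} (1/n) Σ_{k=0}^{n−1} dist(σ^k z, Z_A) = 0. -/

import Mathlib

/-!
The empirical measures along the orbit of `z` have weak-* limit points along every ultrafilter,
and these are shift-invariant. Since `log ‖L_A(·, n)‖` is a subadditive cocycle and
`(1/n) log ‖L_A(z, n)‖ → log ϱ(A)` by weak extremality, telescoping shows that the Birkhoff averages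
of `log ‖L_A(·, n)‖` along `z` are asymptotically at least `n log ϱ(A)`. Passing to a limit measure
`μ` through the continuous truncations `log max (‖L_A(·, n)‖, e^{-j})` and monotone convergence
gives `∫ log ‖L_A(·, n)‖ dμ ≥ n log ϱ(A)`, so `μ` is maximising and `supp μ ⊆ Z_A`. Hence the
continuous function `dist(·, Z_A)` vanishes `μ`-a.e., and its Birkhoff averages along `z`, which
converge along the ultrafilter to its `μ`-integral, tend to `0`.
-/

open MeasureTheory Filter Topology
open scoped ENNReal NNReal
open scoped Matrix.Norms.L2Operator

noncomputable section

/-- The shift map `σ` on one-sided sequences. -/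
def shft {I : Type*} (x : ℕ → I) : ℕ → I := fun n => x (n + 1)

/-- `coc A x n = A_{x (n-1)} ⋯ A_{x 1} A_{x 0}`, i.e. the matrix cocycle `L_A(x,n)`. -/
def coc {I : Type*} {d : ℕ} (A : I → Matrix (Fin d) (Fin d) ℂ) (x : ℕ → I) :
    ℕ → Matrix (Fin d) (Fin d) ℂ
  | 0 => 1
  | n + 1 => A (x n) * coc A x n

/-- The joint spectral radius of the family `A` (with respect to the operator norm induced by
the Euclidean norm).  By Fekete's subadditivity lemma, the limit defining the joint spectral
radius coincides with this infimum. -/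
def jsr {I : Type*} {d : ℕ} (A : I → Matrix (Fin d) (Fin d) ℂ) : ℝ :=
  ⨅ n : ℕ+, (⨆ x : ℕ → I, ‖coc A x (n : ℕ)‖) ^ (((n : ℕ) : ℝ)⁻¹)

/-- `log`, with values in `ℝ ∪ {-∞}`, following the convention `log 0 = -∞`. -/
def elog (r : ℝ) : EReal := if r ≤ 0 then ⊥ else ((Real.log r : ℝ) : EReal)

/-- The nonnegative part of an extended real number, as an extended nonnegative real. -/
def epos (x : EReal) : ℝ≥0∞ := if x = ⊤ then ⊤ else ENNReal.ofReal x.toReal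

/-- Integral of a function with values in `ℝ ∪ {-∞}` (the value may be `-∞`). -/
def eInt {Y : Type*} [MeasurableSpace Y] (μ : Measure Y) (f : Y → EReal) : EReal :=
  ((∫⁻ y, epos (f y) ∂μ : ℝ≥0∞) : EReal) - ((∫⁻ y, epos (-f y) ∂μ : ℝ≥0∞) : EReal)

/-- `(1/n)` as an extended real number. -/
def cE (n : ℕ) : EReal := (((n : ℝ)⁻¹ : ℝ) : EReal)

/-- The set `M_T` of `T`-invariant Borel probability measures. -/
def MTset {X : Type*} [MeasurableSpace X] (T : X → X) : Set (Measure X) :=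
  {μ | IsProbabilityMeasure μ ∧ MeasurePreserving T μ μ}

/-- The set `M_σ` of shift-invariant Borel probability measures on `Σ_I = I^ℕ`. -/
def Minv (I : Type*) [MeasurableSpace I] : Set (Measure (ℕ → I)) :=
  {μ | IsProbabilityMeasure μ ∧ MeasurePreserving shft μ μ}

/-- `(1/n) ∫ log N(L_A(x,n)) dμ(x)`, with values in `ℝ ∪ {-∞}`. -/
def avg {I : Type*} [MeasurableSpace I] {d : ℕ}
    (N : Matrix (Fin d) (Fin d) ℂ → ℝ) (A : I → Matrix (Fin d) (Fin d) ℂ)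
    (μ : Measure (ℕ → I)) (n : ℕ) : EReal :=
  cE n * eInt μ (fun x => elog (N (coc A x n)))

/-- The set of maximising measures `M_max(A)` (defined via the Euclidean operator norm). -/
def Mmax {I : Type*} [MeasurableSpace I] {d : ℕ} (A : I → Matrix (Fin d) (Fin d) ℂ) :
    Set (Measure (ℕ → I)) :=
  {μ | μ ∈ Minv I ∧ (⨅ n : ℕ+, avg (fun M => ‖M‖) A μ (n : ℕ)) = elog (jsr A)}

/-- The topological support of a measure. -/
def msupport {Y : Type*} [TopologicalSpace Y] [MeasurableSpace Y] (μ : Measure Y) : Set Y :=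
  {y | ∀ U : Set Y, IsOpen U → y ∈ U → 0 < μ U}

/-- The Mather set `Z_A`. -/
def mather {I : Type*} [TopologicalSpace I] [MeasurableSpace I] {d : ℕ}
    (A : I → Matrix (Fin d) (Fin d) ℂ) : Set (ℕ → I) :=
  ⋃ μ ∈ Mmax A, msupport μ

/-- `N` is a norm on the complex vector space `E`. -/
def IsNorm {E : Type*} [AddCommGroup E] [Module ℂ E] (N : E → ℝ) : Prop :=
  (∀ v, N v = 0 ↔ v = 0) ∧ (∀ (c : ℂ) (v : E), N (c • v) = ‖c‖ * N v) ∧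
    ∀ v w, N (v + w) ≤ N v + N w

/-- The operator norm on `d × d` matrices induced by a norm `N` on `ℂ^d`. -/
def indNorm {d : ℕ} (N : (Fin d → ℂ) → ℝ) (M : Matrix (Fin d) (Fin d) ℂ) : ℝ :=
  sSup {c | ∃ v, N v = 1 ∧ c = N (M.mulVec v)}

/-- `A` is relatively product bounded. -/
def RelPB {I : Type*} {d : ℕ} (A : I → Matrix (Fin d) (Fin d) ℂ) : Prop :=
  ∃ C > 1, ∀ n : ℕ, 1 ≤ n → ∀ x : ℕ → I, ‖coc A x n‖ ≤ C * jsr A ^ n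

/-- The point `x` is strongly extremal for `A`. -/
def StrongExt {I : Type*} {d : ℕ} (A : I → Matrix (Fin d) (Fin d) ℂ) (x : ℕ → I) : Prop :=
  ∃ ε > 0, ∀ n : ℕ, 1 ≤ n → ε * jsr A ^ n ≤ ‖coc A x n‖

/-- The point `x` is weakly extremal for `A`. -/
def WeakExt {I : Type*} {d : ℕ} (A : I → Matrix (Fin d) (Fin d) ℂ) (x : ℕ → I) : Prop :=
  Tendsto (fun n : ℕ => ‖coc A x n‖ ^ ((n : ℝ)⁻¹)) atTop (𝓝 (jsr A))

/-- `(A1, A2, B, M)` is an upper triangularisation of the family `A`, with respect to the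
decomposition `d = k + m`. -/
def UpperTri {I : Type*} {d k m : ℕ} (A : I → Matrix (Fin d) (Fin d) ℂ) (hd : d = k + m)
    (A1 : I → Matrix (Fin k) (Fin k) ℂ) (A2 : I → Matrix (Fin m) (Fin m) ℂ)
    (B : I → Matrix (Fin k) (Fin m) ℂ) (M : Matrix (Fin d) (Fin d) ℂ) : Prop :=
  IsUnit M ∧ ∀ i : I,
    Matrix.reindex ((finCongr hd).trans finSumFinEquiv.symm)
        ((finCongr hd).trans finSumFinEquiv.symm) (M⁻¹ * A i * M)
      = Matrix.fromBlocks (A1 i) (B i) 0 (A2 i)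

section Cocycle

variable {I : Type*} {d : ℕ} (A : I → Matrix (Fin d) (Fin d) ℂ)

lemma shft_iterate_apply (x : ℕ → I) (k n : ℕ) : shft^[k] x n = x (n + k) := by
  induction k generalizing x with
  | zero => rfl
  | succ k ih => rw [Function.iterate_succ_apply, ih]; rfl

lemma coc_add (x : ℕ → I) (m n : ℕ) :
    coc A x (m + n) = coc A (shft^[m] x) n * coc A x m := by
  induction n with
  | zero => simp [coc]
  | succ n ih =>
    rw [← add_assoc, coc, ih, coc, shft_iterate_apply, add_comm n m, Matrix.mul_assoc]

lemma bddBelow_range_rpow_iSup_norm_coc :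
    BddBelow (Set.range fun n : ℕ+ => (⨆ x : ℕ → I, ‖coc A x n‖) ^ ((n : ℕ) : ℝ)⁻¹) :=
  ⟨0, by
    rintro _ ⟨m, rfl⟩
    exact Real.rpow_nonneg (Real.iSup_nonneg fun _ => norm_nonneg _) _⟩

lemma jsr_le_rpow_iSup_norm_coc (n : ℕ+) :
    jsr A ≤ (⨆ x : ℕ → I, ‖coc A x n‖) ^ ((n : ℕ) : ℝ)⁻¹ :=
  ciInf_le (bddBelow_range_rpow_iSup_norm_coc A) n

lemma iSup_norm_coc_pos (hpos : 0 < jsr A) (n : ℕ+) : 0 < ⨆ x : ℕ → I, ‖coc A x n‖ := by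
  refine (Real.iSup_nonneg fun _ => norm_nonneg _).lt_of_ne fun h => ?_
  have h' := jsr_le_rpow_iSup_norm_coc A n
  rw [← h, Real.zero_rpow (by positivity)] at h'
  exact h'.not_gt hpos

variable [TopologicalSpace I]

lemma continuous_shft : Continuous (shft : (ℕ → I) → ℕ → I) :=
  continuous_pi fun n => continuous_apply (n + 1)

lemma continuous_coc (hA : Continuous A) (n : ℕ) : Continuous fun x : ℕ → I => coc A x n := by
  induction n with
  | zero => exact continuous_const
  | succ n ih => exact (hA.comp (continuous_apply n)).matrix_mul ih

lemma bddAbove_range_norm_coc [CompactSpace I] (hA : Continuous A) (n : ℕ) :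
    BddAbove (Set.range fun x : ℕ → I => ‖coc A x n‖) :=
  (isCompact_range (continuous_coc A hA n).norm).bddAbove

end Cocycle

namespace WeakExt

variable {I : Type*} {d : ℕ} {A : I → Matrix (Fin d) (Fin d) ℂ} {z : ℕ → I}

lemma norm_coc_pos (hz : WeakExt A z) (hpos : 0 < jsr A) (n : ℕ) : 0 < ‖coc A z n‖ := by
  -- if `coc A z n = 0`, every longer product vanishes and the `m`-th roots tend to `0 ≠ jsr A`
  refine (norm_nonneg _).lt_of_ne fun h => hpos.ne' <| tendsto_nhds_unique hz <|
    tendsto_const_nhds.congr' ?_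
  filter_upwards [eventually_gt_atTop n] with m hm
  have hzero : ‖coc A z m‖ = 0 := by
    obtain ⟨k, rfl⟩ := Nat.exists_eq_add_of_le hm.le
    rw [coc_add]
    exact le_antisymm ((norm_mul_le _ _).trans_eq (by rw [← h, mul_zero])) (norm_nonneg _)
  have hm0 : (m : ℝ) ≠ 0 := Nat.cast_ne_zero.mpr (by omega)
  rw [hzero, Real.zero_rpow (inv_ne_zero hm0)]

lemma norm_coc_shift_pos (hz : WeakExt A z) (hpos : 0 < jsr A) (k n : ℕ) :
    0 < ‖coc A (shft^[k] z) n‖ := by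
  have h := hz.norm_coc_pos hpos (k + n)
  rw [coc_add] at h
  exact norm_pos_iff.mpr fun h0 => by simp [h0] at h

lemma log_norm_coc_add_le (hz : WeakExt A z) (hpos : 0 < jsr A) (k n : ℕ) :
    Real.log ‖coc A z (k + n)‖ ≤ Real.log ‖coc A (shft^[k] z) n‖ + Real.log ‖coc A z k‖ := by
  have h := hz.norm_coc_pos hpos (k + n)
  rw [← Real.log_mul (hz.norm_coc_shift_pos hpos k n).ne' (hz.norm_coc_pos hpos k).ne']
  rw [coc_add] at h ⊢
  exact Real.log_le_log h (norm_mul_le _ _)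

lemma tendsto_log_norm_coc_div (hz : WeakExt A z) (hpos : 0 < jsr A) :
    Tendsto (fun n : ℕ => Real.log ‖coc A z n‖ / n) atTop (𝓝 (Real.log (jsr A))) := by
  refine ((Real.continuousAt_log hpos.ne').tendsto.comp hz).congr fun n => ?_
  rw [Function.comp_apply, Real.log_rpow (hz.norm_coc_pos hpos n), inv_mul_eq_div]

end WeakExt

section Subadditive

open Finset

lemma tendsto_comp_add_div_of_tendsto_div {u : ℕ → ℝ} {L : ℝ}
    (hu : Tendsto (fun m => u m / m) atTop (𝓝 L)) (i : ℕ) :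
    Tendsto (fun m => u (m + i) / m) atTop (𝓝 L) := by
  have h1 : Tendsto (fun m : ℕ => u (m + i) / ((m + i : ℕ) : ℝ)) atTop (𝓝 L) :=
    hu.comp (tendsto_add_atTop_nat i)
  have h2 : Tendsto (fun m : ℕ => 1 + (i : ℝ) / m) atTop (𝓝 1) := by
    simpa using tendsto_const_nhds.add (tendsto_const_div_atTop_nhds_zero_nat (i : ℝ))
  have h3 := h1.mul h2
  rw [mul_one] at h3
  refine h3.congr' ?_
  filter_upwards [eventually_gt_atTop 0] with m hm
  have hm' : (m : ℝ) ≠ 0 := by positivity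
  push_cast
  field_simp

variable {X : Type*} {T : X → X} {x : X}

lemma sum_range_add_sub_le_birkhoffSum {φ : ℕ → X → ℝ} {n : ℕ} {g : X → ℝ}
    (hsub : ∀ k, φ (k + n) x ≤ φ n (T^[k] x) + φ k x) (hg : ∀ k, φ n (T^[k] x) ≤ g (T^[k] x))
    (m : ℕ) :
    ∑ i ∈ range n, φ (m + i) x - ∑ i ∈ range n, φ i x ≤ birkhoffSum T g m x := by
  induction m with
  | zero => simp
  | succ m ih =>
    have hshift : ∑ i ∈ range n, φ (m + 1 + i) x + φ m x
        = ∑ i ∈ range n, φ (m + i) x + φ (m + n) x := by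
      simpa [add_right_comm, add_assoc] using
        (sum_range_succ' (fun i => φ (m + i) x) n).symm.trans (sum_range_succ _ n)
    rw [birkhoffSum_succ]
    linarith [hsub m, hg m, add_comm m n]

lemma le_of_tendsto_birkhoffAverage_of_subadditive {φ : ℕ → X → ℝ} {L : ℝ}
    (hsub : ∀ k n, φ (k + n) x ≤ φ n (T^[k] x) + φ k x)
    (hφ : Tendsto (fun m => φ m x / m) atTop (𝓝 L)) (n : ℕ) {g : X → ℝ}
    (hg : ∀ k, φ n (T^[k] x) ≤ g (T^[k] x)) {l : Filter ℕ} [l.NeBot] (hl : l ≤ atTop)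
    {a : ℝ} (ha : Tendsto (fun m => birkhoffAverage ℝ T g m x) l (𝓝 a)) :
    n * L ≤ a := by
  have hlow : Tendsto (fun m : ℕ => (∑ i ∈ range n, φ (m + i) x - ∑ i ∈ range n, φ i x) / m)
      atTop (𝓝 (n * L)) := by
    have := (tendsto_finsetSum (range n) fun i _ => tendsto_comp_add_div_of_tendsto_div hφ i).sub
      (tendsto_const_div_atTop_nhds_zero_nat (∑ i ∈ range n, φ i x))
    simpa [sub_div, sum_div] using this
  refine le_of_tendsto_of_tendsto (hlow.mono_left hl) ha (Eventually.of_forall fun m => ?_)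
  dsimp only
  rw [birkhoffAverage, smul_eq_mul, ← div_eq_inv_mul]
  exact div_le_div_of_nonneg_right (sum_range_add_sub_le_birkhoffSum (hsub · n) hg m)
    m.cast_nonneg

end Subadditive

section EmpiricalMeasure

variable {X : Type*}

lemma birkhoffAverage_comp_self (T : X → X) (f : X → ℝ) (n : ℕ) (x : X) :
    birkhoffAverage ℝ T (f ∘ T) n x = birkhoffAverage ℝ T f n (T x) := by
  simp [birkhoffAverage, birkhoffSum, ← Function.iterate_succ_apply' T,
    Function.iterate_succ_apply]

variable [MeasurableSpace X]

/-- Averages over the `n + 1` points `x, …, T^[n] x`, so that it is a probability measure also for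
`n = 0`. -/
def empiricalMeasure (T : X → X) (x : X) (n : ℕ) : ProbabilityMeasure X :=
  ⟨((n + 1 : ℕ) : ℝ≥0∞)⁻¹ • ∑ k ∈ Finset.range (n + 1), Measure.dirac (T^[k] x), ⟨by
    simp [ENNReal.inv_mul_cancel]⟩⟩

lemma integral_empiricalMeasure [MeasurableSingletonClass X] (T : X → X) (x : X) (n : ℕ)
    (f : X → ℝ) :
    ∫ y, f y ∂(empiricalMeasure T x n : Measure X) = birkhoffAverage ℝ T f (n + 1) x := by
  rw [empiricalMeasure, ProbabilityMeasure.coe_mk, integral_smul_measure,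
    integral_finsetSum_measure fun k _ => integrable_dirac (by simp)]
  simp [integral_dirac, birkhoffAverage, birkhoffSum, ENNReal.toReal_inv, ENNReal.toReal_add]

variable [TopologicalSpace X] [TopologicalSpace.MetrizableSpace X] [CompactSpace X] [BorelSpace X]
  {T : X → X} {x : X}

lemma tendsto_birkhoffAverage_of_tendsto_empiricalMeasure {l : Filter ℕ}
    {μ : ProbabilityMeasure X} (hμ : Tendsto (empiricalMeasure T x) l (𝓝 μ)) {f : X → ℝ}
    (hf : Continuous f) :
    Tendsto (fun n => birkhoffAverage ℝ T f (n + 1) x) l (𝓝 (∫ y, f y ∂(μ : Measure X))) := by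
  simpa [integral_empiricalMeasure] using
    ProbabilityMeasure.tendsto_iff_forall_integral_tendsto.1 hμ
      (BoundedContinuousFunction.mkOfCompact ⟨f, hf⟩)

lemma measurePreserving_of_tendsto_empiricalMeasure (hT : Continuous T) {l : Filter ℕ} [l.NeBot]
    (hl : l ≤ atTop) {μ : ProbabilityMeasure X} (hμ : Tendsto (empiricalMeasure T x) l (𝓝 μ)) :
    MeasurePreserving T μ μ := by
  refine ⟨hT.measurable, ext_of_forall_integral_eq_of_IsFiniteMeasure fun f => ?_⟩
  rw [integral_map hT.aemeasurable f.continuous.aestronglyMeasurable]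
  have hcomp := tendsto_birkhoffAverage_of_tendsto_empiricalMeasure hμ (f.continuous.comp hT)
  have hf := tendsto_birkhoffAverage_of_tendsto_empiricalMeasure hμ f.continuous
  have hdiff : Tendsto (fun n => birkhoffAverage ℝ T f (n + 1) (T x)
      - birkhoffAverage ℝ T f (n + 1) x) l (𝓝 0) :=
    ((tendsto_birkhoffAverage_apply_sub_birkhoffAverage' ℝ f.isBounded_range T x).comp
      (tendsto_add_atTop_nat 1)).mono_left hl
  simp only [birkhoffAverage_comp_self] at hcomp
  exact tendsto_nhds_unique hcomp (by simpa using hf.add hdiff)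

theorem tendsto_birkhoffAverage_of_forall_tendsto_empiricalMeasure {f : X → ℝ}
    (hf : Continuous f) {c : ℝ}
    (h : ∀ (𝒰 : Ultrafilter ℕ) (μ : ProbabilityMeasure X), (𝒰 : Filter ℕ) ≤ atTop →
      Tendsto (empiricalMeasure T x) (𝒰 : Filter ℕ) (𝓝 μ) → ∫ y, f y ∂(μ : Measure X) = c) :
    Tendsto (fun n => birkhoffAverage ℝ T f n x) atTop (𝓝 c) := by
  rw [← tendsto_add_atTop_iff_nat 1, tendsto_iff_ultrafilter]
  intro 𝒰 h𝒰
  obtain ⟨μ, -, hμ⟩ :=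
    isCompact_univ.ultrafilter_le_nhds (𝒰.map (empiricalMeasure T x)) (by simp)
  exact h 𝒰 μ h𝒰 hμ ▸ tendsto_birkhoffAverage_of_tendsto_empiricalMeasure hμ hf

end EmpiricalMeasure

section ExtendedIntegral

lemma elog_of_pos {r : ℝ} (hr : 0 < r) : elog r = Real.log r := if_neg hr.not_ge

lemma elog_le_coe_log {r s : ℝ} (h : r ≤ s) : elog r ≤ Real.log s := by
  unfold elog
  split_ifs with hr
  · exact bot_le
  · exact EReal.coe_le_coe_iff.mpr (Real.log_le_log (not_le.mp hr) h)

lemma monotone_elog : Monotone elog := by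
  intro r s h
  rcases le_or_gt s 0 with hs | hs
  · rw [elog, if_pos (h.trans hs)]
    exact bot_le
  · exact (elog_le_coe_log h).trans_eq (elog_of_pos hs).symm

lemma measurable_elog : Measurable elog :=
  Measurable.ite measurableSet_Iic measurable_const
    (measurable_coe_real_ereal.comp Real.measurable_log)

lemma continuousAt_elog {r : ℝ} (hr : 0 < r) : ContinuousAt elog r :=
  (continuous_coe_real_ereal.continuousAt.comp (Real.continuousAt_log hr.ne')).congr <|
    (eventually_gt_nhds hr).mono fun _ hs => (elog_of_pos hs).symm

lemma max_elog_coe_neg (r : ℝ) (j : ℕ) :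
    max (elog r) ((-j : ℝ) : EReal) = Real.log (max r (Real.exp (-j))) := by
  rw [← Real.log_exp (-j : ℝ), ← elog_of_pos (Real.exp_pos _), ← monotone_elog.map_max,
    elog_of_pos (lt_max_of_lt_right (Real.exp_pos _)), Real.log_exp]

lemma cE_nonneg (n : ℕ) : 0 ≤ cE n := EReal.coe_nonneg.mpr (by positivity)

lemma cE_mul_coe (n : ℕ) (r : ℝ) : cE n * r = ((n : ℝ)⁻¹ * r : ℝ) := by
  rw [cE, ← EReal.coe_mul]

lemma eInt_eq {Y : Type*} [MeasurableSpace Y] (μ : Measure Y) (f : Y → EReal) :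
    eInt μ f = ↑(∫⁻ y, (f y).toENNReal ∂μ) - ↑(∫⁻ y, (-f y).toENNReal ∂μ) := rfl

lemma ofReal_toReal_max_coe_neg {a : EReal} (ha : a ≠ ⊤) (j : ℕ) :
    ENNReal.ofReal (max a ((-j : ℝ) : EReal)).toReal = a.toENNReal ∧
      ENNReal.ofReal (-(max a ((-j : ℝ) : EReal)).toReal) = min (-a).toENNReal j := by
  induction a using EReal.rec with
  | bot =>
    rw [max_eq_right bot_le, EReal.toReal_coe, neg_neg, EReal.neg_bot, EReal.toENNReal_top,
      EReal.toENNReal_bot, ENNReal.ofReal_of_nonpos (by simp), ENNReal.ofReal_natCast]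
    simp
  | coe r =>
    rw [← EReal.coe_strictMono.monotone.map_max, EReal.toReal_coe, ← EReal.coe_neg,
      EReal.real_coe_toENNReal, EReal.real_coe_toENNReal, ← ENNReal.ofReal_natCast,
      ← ENNReal.ofReal_min, neg_sup, neg_neg, ENNReal.ofReal_max,
      ENNReal.ofReal_of_nonpos (by simp : -(j : ℝ) ≤ 0), max_zero]
    exact ⟨rfl, rfl⟩
  | top => exact absurd rfl ha

variable {Y : Type*} [MeasurableSpace Y] {μ : Measure Y} [IsProbabilityMeasure μ]

lemma eInt_le_coe {f : Y → EReal} {c : ℝ} (hf : ∀ y, f y ≤ c) : eInt μ f ≤ c := by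
  have hpos : ∫⁻ y, (f y).toENNReal ∂μ ≤ ENNReal.ofReal c := by
    simpa using lintegral_mono (μ := μ) fun y => EReal.toENNReal_le_toENNReal (hf y)
  have hneg : ENNReal.ofReal (-c) ≤ ∫⁻ y, (-f y).toENNReal ∂μ := by
    simpa using lintegral_mono (μ := μ) fun y =>
      EReal.toENNReal_le_toENNReal (EReal.neg_le_neg_iff.mpr (hf y))
  calc eInt μ f ≤ ↑(ENNReal.ofReal c) - ↑(ENNReal.ofReal (-c)) :=
        EReal.sub_le_sub (EReal.coe_ennreal_le_coe_ennreal_iff.mpr hpos)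
          (EReal.coe_ennreal_le_coe_ennreal_iff.mpr hneg)
    _ = c := by
        rw [EReal.coe_ennreal_ofReal, EReal.coe_ennreal_ofReal, ← EReal.coe_sub]
        rcases le_total c 0 with h | h <;> simp [h]

lemma coe_le_eInt_of_le_integral_max {f : Y → EReal} (hf : Measurable f) {b c : ℝ}
    (hfb : ∀ y, f y ≤ b) (hc : ∀ j : ℕ, c ≤ ∫ y, (max (f y) ((-j : ℝ) : EReal)).toReal ∂μ) :
    (c : EReal) ≤ eInt μ f := by
  -- the truncations all have the positive part of `f`, and their negative parts increase to that
  -- of `f`, so monotone convergence bounds the latter by `P - c`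
  rw [eInt_eq]
  set P := ∫⁻ y, (f y).toENNReal ∂μ
  set N : ℕ → ℝ≥0∞ := fun j => ∫⁻ y, min (-f y).toENNReal j ∂μ
  have hfb' : ∀ y, (f y).toENNReal ≤ ENNReal.ofReal b := fun y =>
    (EReal.toENNReal_le_toENNReal (hfb y)).trans_eq (EReal.real_coe_toENNReal b)
  have hP : P ≠ ⊤ := ne_top_of_le_ne_top ENNReal.ofReal_ne_top <| by
    simpa using lintegral_mono (μ := μ) hfb'
  have hN : ∀ j : ℕ, N j ≠ ⊤ := fun j => ne_top_of_le_ne_top (ENNReal.natCast_ne_top j) <| by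
    simpa using lintegral_mono (μ := μ) fun y => min_le_right (-f y).toENNReal j
  have htrunc := fun y j =>
    ofReal_toReal_max_coe_neg ((hfb y).trans_lt (EReal.coe_lt_top b)).ne j
  have hint : ∀ j : ℕ,
      ∫ y, (max (f y) ((-j : ℝ) : EReal)).toReal ∂μ = P.toReal - (N j).toReal := by
    intro j
    have hbound : ∀ y, ‖(max (f y) ((-j : ℝ) : EReal)).toReal‖ ≤ |b| + j := by
      intro y
      have h1 := (htrunc y j).1.trans_le (hfb' y)
      have h2 := (htrunc y j).2.trans_le (min_le_right _ _)
      rw [ENNReal.ofReal_le_ofReal_iff'] at h1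
      rw [← ENNReal.ofReal_natCast, ENNReal.ofReal_le_ofReal_iff'] at h2
      rw [Real.norm_eq_abs, abs_le]
      constructor <;> rcases h1 with h1 | h1 <;> rcases h2 with h2 | h2 <;>
        linarith [le_abs_self b, abs_nonneg b, (j.cast_nonneg : (0 : ℝ) ≤ j)]
    rw [integral_eq_lintegral_pos_part_sub_lintegral_neg_part <|
      Integrable.of_bound (hf.max measurable_const).ereal_toReal.aestronglyMeasurable _
        (Eventually.of_forall hbound)]
    simp only [htrunc, P, N]
  have hsup : ∫⁻ y, (-f y).toENNReal ∂μ = ⨆ j : ℕ, N j := by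
    have hmeas : ∀ j : ℕ, Measurable fun y => min (-f y).toENNReal j := fun j =>
      hf.neg.ereal_toENNReal.min measurable_const
    rw [← lintegral_iSup hmeas fun i j hij y => min_le_min_left _ (Nat.cast_le.mpr hij)]
    congr with y
    rw [← inf_iSup_eq, ENNReal.iSup_natCast, inf_top_eq]
  have hNle : ∀ j, (N j).toReal ≤ P.toReal - c := fun j => by linarith [hc j, hint j]
  have hPc : 0 ≤ P.toReal - c := ENNReal.toReal_nonneg.trans (hNle 0)
  have hneg : ∫⁻ y, (-f y).toENNReal ∂μ ≤ ENNReal.ofReal (P.toReal - c) :=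
    hsup ▸ iSup_le fun j => (ENNReal.le_ofReal_iff_toReal_le (hN j) hPc).mpr (hNle j)
  rw [← EReal.coe_ennreal_toReal hP, ← EReal.coe_ennreal_toReal (ne_top_of_le_ne_top
    ENNReal.ofReal_ne_top hneg), ← EReal.coe_sub, EReal.coe_le_coe_iff]
  linarith [ENNReal.toReal_le_of_le_ofReal hPc hneg]

lemma coe_le_eInt_elog {g : Y → ℝ} (hg : Measurable g) {b c : ℝ} (hgb : ∀ y, g y ≤ b)
    (hc : ∀ j : ℕ, c ≤ ∫ y, Real.log (max (g y) (Real.exp (-j))) ∂μ) :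
    (c : EReal) ≤ eInt μ (fun y => elog (g y)) :=
  coe_le_eInt_of_le_integral_max (measurable_elog.comp hg) (fun y => elog_le_coe_log (hgb y))
    (by simpa only [Function.comp_apply, max_elog_coe_neg, EReal.toReal_coe] using hc)

end ExtendedIntegral

lemma msupport_eq_support {Y : Type*} [TopologicalSpace Y] [MeasurableSpace Y]
    (μ : Measure Y) : msupport μ = μ.support := by
  rw [Measure.support_eq_forall_isOpen]
  exact Set.ext fun _ => forall_congr' fun _ => Imp.swap

lemma sInf_dist_eq_infDist {α : Type*} [PseudoMetricSpace α] (x : α) (s : Set α) :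
    sInf {r : ℝ | ∃ y ∈ s, r = dist x y} = Metric.infDist x s := by
  rw [Metric.infDist_eq_iInf, iInf]
  congr 1
  ext r
  simp [eq_comm]

lemma elog_jsr_eq_iInf {I : Type*} {d : ℕ} {A : I → Matrix (Fin d) (Fin d) ℂ}
    (hpos : 0 < jsr A) :
    elog (jsr A) = ⨅ n : ℕ+, elog ((⨆ x : ℕ → I, ‖coc A x n‖) ^ ((n : ℕ) : ℝ)⁻¹) :=
  monotone_elog.map_ciInf_of_continuousAt (continuousAt_elog hpos)
    (bddBelow_range_rpow_iSup_norm_coc A)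

section Maximising

variable {I : Type*} [MetricSpace I] [CompactSpace I] [MeasurableSpace I]
  {d : ℕ} {A : I → Matrix (Fin d) (Fin d) ℂ} (μ : Measure (ℕ → I)) [IsProbabilityMeasure μ]

lemma avg_norm_le_elog (hA : Continuous A) (hpos : 0 < jsr A) (n : ℕ+) :
    avg (fun M => ‖M‖) A μ n ≤ elog ((⨆ x : ℕ → I, ‖coc A x n‖) ^ ((n : ℕ) : ℝ)⁻¹) := by
  have hG := iSup_norm_coc_pos A hpos n
  rw [elog_of_pos (Real.rpow_pos_of_pos hG _), Real.log_rpow hG, ← cE_mul_coe]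
  exact mul_le_mul_of_nonneg_left
    (eInt_le_coe fun x => elog_le_coe_log (le_ciSup (bddAbove_range_norm_coc A hA n) x))
    (cE_nonneg n)

lemma elog_jsr_le_avg_norm [BorelSpace I] (hA : Continuous A) (hpos : 0 < jsr A) (n : ℕ+)
    (hlog : ∀ j : ℕ, (n : ℕ) * Real.log (jsr A)
      ≤ ∫ x, Real.log (max ‖coc A x n‖ (Real.exp (-j))) ∂μ) :
    elog (jsr A) ≤ avg (fun M => ‖M‖) A μ n := by
  have hn : ((n : ℕ) : ℝ) ≠ 0 := by positivity
  calc elog (jsr A) = cE n * (((n : ℕ) * Real.log (jsr A) : ℝ) : EReal) := by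
        rw [elog_of_pos hpos, cE_mul_coe, inv_mul_cancel_left₀ hn]
    _ ≤ avg (fun M => ‖M‖) A μ n := mul_le_mul_of_nonneg_left
        (coe_le_eInt_elog (continuous_coc A hA n).norm.measurable
          (fun x => le_ciSup (bddAbove_range_norm_coc A hA n) x) hlog) (cE_nonneg n)

lemma mem_Mmax_of_le_integral_log [BorelSpace I] (hA : Continuous A) (hpos : 0 < jsr A)
    (hμ : MeasurePreserving shft μ μ)
    (hlog : ∀ (n : ℕ+) (j : ℕ), (n : ℕ) * Real.log (jsr A)
      ≤ ∫ x, Real.log (max ‖coc A x n‖ (Real.exp (-j))) ∂μ) :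
    μ ∈ Mmax A :=
  ⟨⟨inferInstance, hμ⟩, le_antisymm
    ((iInf_mono fun n => avg_norm_le_elog μ hA hpos n).trans_eq (elog_jsr_eq_iInf hpos).symm)
    (le_iInf fun n => elog_jsr_le_avg_norm μ hA hpos n (hlog n))⟩

end Maximising

theorem WeakExt.mem_Mmax_of_tendsto_empiricalMeasure {I : Type*} [MetricSpace I]
    [CompactSpace I] [MeasurableSpace I] [BorelSpace I] {d : ℕ} {A : I → Matrix (Fin d) (Fin d) ℂ}
    {z : ℕ → I} (hz : WeakExt A z) (hA : Continuous A) (hpos : 0 < jsr A) {𝒰 : Ultrafilter ℕ}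
    (h𝒰 : (𝒰 : Filter ℕ) ≤ atTop)
    {μ : ProbabilityMeasure (ℕ → I)} (hμ : Tendsto (empiricalMeasure shft z) 𝒰 (𝓝 μ)) :
    (μ : Measure (ℕ → I)) ∈ Mmax A := by
  refine mem_Mmax_of_le_integral_log _ hA hpos
    (measurePreserving_of_tendsto_empiricalMeasure continuous_shft h𝒰 hμ) fun n j => ?_
  have hcont : Continuous fun x : ℕ → I => Real.log (max ‖coc A x n‖ (Real.exp (-j))) :=
    ((continuous_coc A hA n).norm.max continuous_const).log
      fun x => (lt_max_of_lt_right (Real.exp_pos _)).ne'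
  exact le_of_tendsto_birkhoffAverage_of_subadditive (φ := fun m x => Real.log ‖coc A x m‖)
    (hz.log_norm_coc_add_le hpos) (hz.tendsto_log_norm_coc_div hpos) n
    (fun k => Real.log_le_log (hz.norm_coc_shift_pos hpos k n) (le_max_left _ _))
    ((tendsto_add_atTop_nat 1).mono_left h𝒰)
    (tendsto_map'_iff.2 (tendsto_birkhoffAverage_of_tendsto_empiricalMeasure hμ hcont))

theorem stmt5_general {I : Type*} [MetricSpace I] [CompactSpace I]
    [MeasurableSpace I] [BorelSpace I] {d : ℕ}
    (A : I → Matrix (Fin d) (Fin d) ℂ) (hA : Continuous A) (hpos : 0 < jsr A)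
    (m2 : MetricSpace (ℕ → I))
    (hm2 : m2.toPseudoMetricSpace.toUniformSpace.toTopologicalSpace
      = (inferInstance : TopologicalSpace (ℕ → I)))
    (z : ℕ → I) (hz : WeakExt A z) :
    Tendsto (fun n : ℕ => (n : ℝ)⁻¹ * ∑ k ∈ Finset.range n,
        sInf {r : ℝ | ∃ y ∈ mather A,
          r = @Dist.dist _ m2.toPseudoMetricSpace.toDist (shft^[k] z) y})
      atTop (𝓝 0) := by
  let F : (ℕ → I) → ℝ := fun x => @Metric.infDist _ m2.toPseudoMetricSpace x (mather A)
  have hF : Continuous F := by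
    have h := @Metric.continuous_infDist_pt _ m2.toPseudoMetricSpace (mather A)
    rwa [hm2] at h
  simp only [@sInf_dist_eq_infDist _ m2.toPseudoMetricSpace]
  refine tendsto_birkhoffAverage_of_forall_tendsto_empiricalMeasure (T := shft) hF
    fun 𝒰 μ h𝒰 hμ => integral_eq_zero_of_ae
      (mem_of_superset (Measure.support_mem_ae (μ := (μ : Measure (ℕ → I)))) fun x hx => ?_)
  have hmax := hz.mem_Mmax_of_tendsto_empiricalMeasure hA hpos h𝒰 hμ
  exact @Metric.infDist_zero_of_mem _ m2.toPseudoMetricSpace _ _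
    (Set.mem_biUnion hmax (by rwa [msupport_eq_support]))

/-- Theorem 3 (v) of the paper: with respect to any metric `m2` generating
the product topology on `Σ_I`, the orbit of any weakly extremal point converges to the
Mather set in the sense of Birkhoff averages of the distance function. -/
theorem stmt5 {I : Type*} [MetricSpace I] [CompactSpace I] [Nonempty I]
    [MeasurableSpace I] [BorelSpace I] {d : ℕ}
    (A : I → Matrix (Fin d) (Fin d) ℂ) (hA : Continuous A) (hpos : 0 < jsr A)
    (m2 : MetricSpace (ℕ → I))
    (hm2 : m2.toPseudoMetricSpace.toUniformSpace.toTopologicalSpace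
      = (inferInstance : TopologicalSpace (ℕ → I)))
    (z : ℕ → I) (hz : WeakExt A z) :
    Tendsto (fun n : ℕ => (n : ℝ)⁻¹ * ∑ k ∈ Finset.range n,
        sInf {r : ℝ | ∃ y ∈ mather A,
          r = @Dist.dist _ m2.toPseudoMetricSpace.toDist (shft^[k] z) y})
      atTop (𝓝 0) :=
  stmt5_general A hA hpos m2 hm2 z hz

end
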